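/- arXiv:2405.13363 — 7 statements merged into one kernel-verified Lean document; each statement's English description precedes it below -/
import Mathlib

section
/- Let D be a ⟨2,2⟩ digraph and let u be a vertex of degree 2 in CCE(D). Then u has outdegree exactly 2 and indegree exactly 2 in D, and for each neighbor v of u in CCE(D), the vertices u and v have exactly one common prey and exactly one common predator in D. -/
open SimpleGraph

/-- A simple digraph given by its arc relation `A` has no loops, and every vertex has
outdegree at most 2 and indegree at most 2. -/
def IsTwoTwo {V : Type*} (A : V → V → Prop) : Prop :=
  (∀ v, ¬ A v v) ∧
  (∀ v a b c, A v a → A v b → A v c → a = b ∨ a = c ∨ b = c) ∧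
  (∀ v a b c, A a v → A b v → A c v → a = b ∨ a = c ∨ b = c)

/-- The competition-common enemy graph of a digraph with arc relation `A`. -/
def CCE {V : Type*} (A : V → V → Prop) : SimpleGraph V where
  Adj u v := u ≠ v ∧ (∃ x, A u x ∧ A v x) ∧ (∃ y, A y u ∧ A y v)
  symm := ⟨by
    rintro u v ⟨h, ⟨x, hx1, hx2⟩, ⟨y, hy1, hy2⟩⟩
    exact ⟨h.symm, ⟨x, hx2, hx1⟩, ⟨y, hy2, hy1⟩⟩⟩
  loopless := ⟨fun v h => h.1 rfl⟩

/-- The connected component `c` of `G` induces a (finite) path graph. -/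
def IsPathComponent {V : Type*} (G : SimpleGraph V) (c : G.ConnectedComponent) : Prop :=
  ∃ n : ℕ, Nonempty ((G.induce c.supp) ≃g pathGraph n)

/-- The connected component `c` of `G` induces a cycle of length at least 3. -/
def IsCycleComponent {V : Type*} (G : SimpleGraph V) (c : G.ConnectedComponent) : Prop :=
  ∃ n : ℕ, 3 ≤ n ∧ Nonempty ((G.induce c.supp) ≃g cycleGraph n)

/-- `G` is the CCE graph of some `⟨2,2⟩` digraph. -/
def IsTwoTwoCCE {V : Type*} (G : SimpleGraph V) : Prop :=
  ∃ (W : Type) (A : W → W → Prop), IsTwoTwo A ∧ Nonempty (G ≃g CCE A)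

/-- `A` is acyclic: it has no directed cycle. -/
def DigraphAcyclic {V : Type*} (A : V → V → Prop) : Prop :=
  ∀ v, ¬ Relation.TransGen A v v

/-- A `(2,2)` digraph: an acyclic `⟨2,2⟩` digraph. -/
def IsTwoTwoAcyclic {V : Type*} (A : V → V → Prop) : Prop :=
  IsTwoTwo A ∧ DigraphAcyclic A

/-- `G` is an interval graph. -/
def IsIntervalGraph {V : Type*} (G : SimpleGraph V) : Prop :=
  ∃ f : V → Set ℝ, (∀ v, ∃ a b : ℝ, f v = Set.Icc a b) ∧
    ∀ u v, u ≠ v → (G.Adj u v ↔ (f u ∩ f v).Nonempty)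

/-- `A` is a minimal `(2,2)` digraph realizing its CCE graph: no proper subdigraph on the
same vertex set has the same CCE graph. -/
def MinimalTwoTwoAcyclic {V : Type*} (A : V → V → Prop) : Prop :=
  IsTwoTwoAcyclic A ∧
    ∀ A' : V → V → Prop, (∀ u v, A' u v → A u v) → CCE A' = CCE A → ∀ u v, A u v → A' u v

/-!
Let `a ≠ b` be neighbours of `u` in `CCE A`, with common prey `xa` of `u, a` and `xb` of `u, b`.
Since `xa` has at most two predators, `b` does not prey on it, so `xa ≠ xb` and these are the two
prey of `u`. A vertex `v ≠ u, b` cannot prey on `xb`, whose predators are `u` and `b`, so its only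
possible common prey with `u` is `xa`; symmetrically for `v ≠ a`. Reversing all arcs exchanges prey
and predators, which gives the statements about predators.
-/

-- `IsTwoTwo A` unfolds to `(∀ v, ¬ A v v) ∧ OutdegreeLeTwo A ∧ OutdegreeLeTwo (flip A)`.
def OutdegreeLeTwo {V : Type*} (A : V → V → Prop) : Prop :=
  ∀ v a b c, A v a → A v b → A v c → a = b ∨ a = c ∨ b = c

section CommonPrey

variable {V : Type*} {A : V → V → Prop}

theorem OutdegreeLeTwo.eq_of_ne_of_ne (h : OutdegreeLeTwo A) {v a b c : V}
    (ha : A v a) (hb : A v b) (hc : A v c) (hab : a ≠ b) (hac : a ≠ c) : b = c :=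
  ((h v a b c ha hb hc).resolve_left hab).resolve_left hac

theorem common_prey_ne_of_ne (hin : OutdegreeLeTwo (flip A)) {u a b xa xb : V}
    (hab : a ≠ b) (hua : u ≠ a) (hub : u ≠ b) (hxa : A u xa ∧ A a xa) (hxb : A u xb ∧ A b xb) :
    xa ≠ xb := by
  rintro rfl
  exact hab (hin.eq_of_ne_of_ne hxa.1 hxa.2 hxb.2 hua hub)

theorem eq_of_common_prey (hout : OutdegreeLeTwo A) (hin : OutdegreeLeTwo (flip A))
    {u v b xa xb y : V} (huv : u ≠ v) (hub : u ≠ b) (hvb : v ≠ b)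
    (hxa : A u xa) (hxb : A u xb ∧ A b xb) (hx : xa ≠ xb) (hy : A u y ∧ A v y) : y = xa := by
  have hyxb : y ≠ xb := by
    rintro rfl
    exact hvb (hin.eq_of_ne_of_ne hy.1 hy.2 hxb.2 huv hub)
  exact (hout.eq_of_ne_of_ne hxb.1 hxa hy.1 hx.symm hyxb.symm).symm

theorem two_prey_and_existsUnique_common_prey (hout : OutdegreeLeTwo A)
    (hin : OutdegreeLeTwo (flip A)) {u a b : V} (hab : a ≠ b) (hua : u ≠ a) (hub : u ≠ b)
    (ha : ∃ x, A u x ∧ A a x) (hb : ∃ x, A u x ∧ A b x) :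
    (∃ x y, x ≠ y ∧ A u x ∧ A u y) ∧
      ∀ v, u ≠ v → (∃ x, A u x ∧ A v x) → ∃! x, A u x ∧ A v x := by
  obtain ⟨xa, hxa⟩ := ha
  obtain ⟨xb, hxb⟩ := hb
  have hx : xa ≠ xb := common_prey_ne_of_ne hin hab hua hub hxa hxb
  refine ⟨⟨xa, xb, hx, hxa.1, hxb.1⟩, fun v huv ⟨x, hxv⟩ => ?_⟩
  obtain ⟨z, hz⟩ : ∃ z, ∀ y, A u y ∧ A v y → y = z := by
    by_cases hva : v = a
    · exact ⟨xa, fun y hy => eq_of_common_prey hout hin huv hub (hva ▸ hab) hxa.1 hxb hx hy⟩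
    · exact ⟨xb, fun y hy => eq_of_common_prey hout hin huv hua hva hxb.1 hxa hx.symm hy⟩
  exact ⟨x, hxv, fun y hy => (hz y hy).trans (hz x hxv).symm⟩

end CommonPrey

theorem stmt1 {V : Type*} (A : V → V → Prop) (hA : IsTwoTwo A) (u : V)
    (hdeg : ∃ a b, a ≠ b ∧ (CCE A).Adj u a ∧ (CCE A).Adj u b) :
    (∃ a b, a ≠ b ∧ A u a ∧ A u b) ∧
    (∃ a b, a ≠ b ∧ A a u ∧ A b u) ∧
    (∀ v, (CCE A).Adj u v →
      (∃! x, A u x ∧ A v x) ∧ (∃! y, A y u ∧ A y v)) := by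
  obtain ⟨a, b, hab, ⟨hua, ha_prey, ha_pred⟩, ⟨hub, hb_prey, hb_pred⟩⟩ := hdeg
  obtain ⟨-, hout, hin⟩ := hA
  obtain ⟨hprey, hprey_unique⟩ :=
    two_prey_and_existsUnique_common_prey hout hin hab hua hub ha_prey hb_prey
  obtain ⟨hpred, hpred_unique⟩ :=
    two_prey_and_existsUnique_common_prey (A := flip A) hin hout hab hua hub ha_pred hb_pred
  exact ⟨hprey, hpred, fun v ⟨huv, hv_prey, hv_pred⟩ =>
    ⟨hprey_unique v huv hv_prey, hpred_unique v huv hv_pred⟩⟩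
end

section
/- Let D be a ⟨2,2⟩ digraph with CCE graph G, and let w be a vertex of D with two prey u and v. If u and v are not adjacent in G, then each of u and v has degree at most 1 in G. -/
open SimpleGraph

/-! Let `a`, `b` be `G`-neighbours of `u`, with common predators `yₐ`, `y_b` shared with `u`.
Neither is `w`: a third prey `a` of `w` would have to equal `v`, which is not a neighbour of `u`.
Since `u` has at most two predators, `yₐ = y_b`, and then `u`, `a`, `b` are prey of this one
vertex, which has outdegree at most 2, so `a = b`. -/

namespace IsTwoTwo

variable {V : Type*} {A : V → V → Prop}

theorem out_eq_of_ne (hA : IsTwoTwo A) {x a b c : V} (ha : A x a) (hb : A x b) (hc : A x c)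
    (hab : a ≠ b) (hac : a ≠ c) : b = c :=
  ((hA.2.1 x a b c ha hb hc).resolve_left hab).resolve_left hac

theorem in_eq_of_ne (hA : IsTwoTwo A) {x a b c : V} (ha : A a x) (hb : A b x) (hc : A c x)
    (hab : a ≠ b) (hac : a ≠ c) : b = c :=
  ((hA.2.2 x a b c ha hb hc).resolve_left hab).resolve_left hac

theorem not_prey_of_cce_adj (hA : IsTwoTwo A) {w u v a : V} (hu : A w u) (hv : A w v)
    (huv : u ≠ v) (hnadj : ¬ (CCE A).Adj u v) (ha : (CCE A).Adj u a) : ¬ A w a := by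
  intro hwa
  have hva : v = a := hA.out_eq_of_ne hu hv hwa huv ha.ne
  exact hnadj (hva ▸ ha)

theorem cce_adj_eq_of_forall_not_prey (hA : IsTwoTwo A) {w u : V} (hw : A w u)
    (hsep : ∀ a, (CCE A).Adj u a → ¬ A w a) :
    ∀ a b, (CCE A).Adj u a → (CCE A).Adj u b → a = b := by
  intro a b ha hb
  obtain ⟨hua, -, ya, hyau, hyaa⟩ := id ha
  obtain ⟨hub, -, yb, hybu, hybb⟩ := id hb
  have hwya : w ≠ ya := by rintro rfl; exact hsep a ha hyaa
  have hwyb : w ≠ yb := by rintro rfl; exact hsep b hb hybb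
  obtain rfl : ya = yb := hA.in_eq_of_ne hw hyau hybu hwya hwyb
  exact hA.out_eq_of_ne hyau hyaa hybb hua hub

end IsTwoTwo

theorem stmt2 {V : Type*} (A : V → V → Prop) (hA : IsTwoTwo A) (w u v : V)
    (hu : A w u) (hv : A w v) (huv : u ≠ v) (hnadj : ¬ (CCE A).Adj u v) :
    (∀ a b, (CCE A).Adj u a → (CCE A).Adj u b → a = b) ∧
    (∀ a b, (CCE A).Adj v a → (CCE A).Adj v b → a = b) :=
  ⟨hA.cce_adj_eq_of_forall_not_prey hu fun _ ↦ hA.not_prey_of_cce_adj hu hv huv hnadj,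
    hA.cce_adj_eq_of_forall_not_prey hv fun _ ↦
      hA.not_prey_of_cce_adj hv hu huv.symm fun h ↦ hnadj h.symm⟩
end

section
/- No nontrivial path (a path graph on at least 2 vertices) is the CCE graph of any ⟨2,2⟩ digraph. -/
open SimpleGraph

/-!
Label the vertices `0, …, n-1` along the path. A common in-neighbour of an edge `{k, k+1}` has
out-neighbourhood exactly `{k, k+1}`, so it determines the edge: the `n-1` edges have distinct
common in-neighbours and at most one vertex is none of them. If `0` were that vertex, every
`k ≥ 1` would have out-neighbourhood `{j, j+1}` for some edge `j`, and comparing common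
out-neighbours along the path (and excluding loops) forces `j ≥ k + 1`, impossible at `k = n-1`.
So, also after reversing the path or the arcs, both ends are common in- and out-neighbours of
edges. An in-neighbour of `0` that is itself a common in-neighbour of an edge would have
out-neighbourhood `{0, 1}`, and two such vertices leave no common in-neighbour for `{1, 2}`; so
`0`, and likewise `n-1`, has the exceptional vertex as an in-neighbour. Hence `0` and `n-1` have a
common in-neighbour and, dually, a common out-neighbour: they are adjacent in the CCE graph,
which a path on `n ≥ 3` vertices forbids. For `n = 2` a common out-neighbour would be a loop.
-/

section General

variable {V W : Type*} {A : V → V → Prop}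

theorem IsTwoTwo.ne_of_rel (hA : IsTwoTwo A) {a b : V} (h : A a b) : a ≠ b := by
  rintro rfl
  exact hA.1 a h

theorem IsTwoTwo.eq_or_eq_of_out (hA : IsTwoTwo A) {v a b x : V} (ha : A v a) (hb : A v b)
    (hab : a ≠ b) (hx : A v x) : x = a ∨ x = b := by
  rcases hA.2.1 v x a b hx ha hb with h | h | h
  exacts [Or.inl h, Or.inr h, absurd h hab]

theorem IsTwoTwo.eq_or_eq_of_in (hA : IsTwoTwo A) {v a b x : V} (ha : A a v) (hb : A b v)
    (hab : a ≠ b) (hx : A x v) : x = a ∨ x = b := by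
  rcases hA.2.2 v x a b hx ha hb with h | h | h
  exacts [Or.inl h, Or.inr h, absurd h hab]

theorem IsTwoTwo.flip (hA : IsTwoTwo A) : IsTwoTwo (flip A) :=
  ⟨hA.1, hA.2.2, hA.2.1⟩

theorem IsTwoTwo.map (hA : IsTwoTwo A) {f : V → W} (hf : Function.Injective f) :
    IsTwoTwo (Relation.Map A f f) := by
  refine ⟨?_, ?_, ?_⟩
  · rintro _ ⟨a, b, hab, rfl, hba⟩
    exact hA.ne_of_rel hab (hf hba.symm)
  · rintro _ _ _ _ ⟨a, x, hx, rfl, rfl⟩ ⟨a', y, hy, ha', rfl⟩ ⟨a'', z, hz, ha'', rfl⟩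
    obtain rfl := hf ha'.symm
    obtain rfl := hf ha''.symm
    rcases hA.2.1 a x y z hx hy hz with rfl | rfl | rfl <;> simp
  · rintro _ _ _ _ ⟨x, a, hx, rfl, rfl⟩ ⟨y, a', hy, rfl, ha'⟩ ⟨z, a'', hz, rfl, ha''⟩
    obtain rfl := hf ha'.symm
    obtain rfl := hf ha''.symm
    rcases hA.2.2 a x y z hx hy hz with rfl | rfl | rfl <;> simp

theorem cce_flip (A : V → V → Prop) : CCE (flip A) = CCE A := by
  ext u v
  exact and_congr_right fun _ => and_comm

theorem cce_map_adj {f : V → W} (hf : Function.Injective f) {a b : V} :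
    (CCE (Relation.Map A f f)).Adj (f a) (f b) ↔ (CCE A).Adj a b := by
  simp only [CCE, Relation.Map, hf.ne_iff, hf.eq_iff]
  refine and_congr_right fun _ => and_congr ⟨?_, ?_⟩ ⟨?_, ?_⟩
  · rintro ⟨_, ⟨_, x, hx, rfl, rfl⟩, ⟨_, x', hx', rfl, hxx'⟩⟩
    exact ⟨x, hx, hf hxx' ▸ hx'⟩
  · rintro ⟨x, hx, hx'⟩
    exact ⟨f x, ⟨a, x, hx, rfl, rfl⟩, ⟨b, x, hx', rfl, rfl⟩⟩
  · rintro ⟨_, ⟨y, _, hy, rfl, rfl⟩, ⟨y', _, hy', hyy', rfl⟩⟩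
    exact ⟨y, hy, hf hyy' ▸ hy'⟩
  · rintro ⟨y, hy, hy'⟩
    exact ⟨f y, ⟨y, a, hy, rfl, rfl⟩, ⟨y, b, hy', rfl, rfl⟩⟩

end General

structure CCEHamPath (R : ℕ → ℕ → Prop) (n : ℕ) : Prop where
  twoTwo : IsTwoTwo R
  lt_of_rel : ∀ {i j}, R i j → i < n ∧ j < n
  adj : ∀ k, k + 1 < n → (CCE R).Adj k (k + 1)

def PathEnemy (R : ℕ → ℕ → Prop) (n v : ℕ) : Prop :=
  ∃ k, k + 1 < n ∧ R v k ∧ R v (k + 1)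

/-- The guards stop the truncated `n - 1 - i` from folding vertices `i ≥ n` onto `0`. -/
def reverseRel (R : ℕ → ℕ → Prop) (n : ℕ) (i j : ℕ) : Prop :=
  i < n ∧ j < n ∧ R (n - 1 - i) (n - 1 - j)

namespace CCEHamPath

variable {R : ℕ → ℕ → Prop} {n : ℕ}

theorem flip (h : CCEHamPath R n) : CCEHamPath (flip R) n where
  twoTwo := h.twoTwo.flip
  lt_of_rel hij := (h.lt_of_rel hij).symm
  adj k hk := (cce_flip R).symm ▸ h.adj k hk

theorem reverse (h : CCEHamPath R n) : CCEHamPath (reverseRel R n) n := by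
  have hR := h.twoTwo
  refine ⟨⟨?_, ?_, ?_⟩, fun hij => ⟨hij.1, hij.2.1⟩, fun k hk => ?_⟩
  · exact fun v hv => hR.1 _ hv.2.2
  · rintro v a b c ⟨-, ha, hva⟩ ⟨-, hb, hvb⟩ ⟨-, hc, hvc⟩
    have := hR.2.1 _ _ _ _ hva hvb hvc
    omega
  · rintro v a b c ⟨ha, -, hav⟩ ⟨hb, -, hbv⟩ ⟨hc, -, hcv⟩
    have := hR.2.2 _ _ _ _ hav hbv hcv
    omega
  obtain ⟨-, ⟨x, hx, hx'⟩, ⟨y, hy, hy'⟩⟩ := h.adj (n - 2 - k) (by omega)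
  have hxn := (h.lt_of_rel hx).2
  have hyn := (h.lt_of_rel hy).1
  have hk' : n - 1 - (k + 1) = n - 2 - k := by omega
  have hk'' : n - 1 - k = n - 2 - k + 1 := by omega
  have hx_rev : n - 1 - (n - 1 - x) = x := by omega
  have hy_rev : n - 1 - (n - 1 - y) = y := by omega
  refine ⟨by omega, ⟨n - 1 - x, ⟨by omega, by omega, ?_⟩, ⟨by omega, by omega, ?_⟩⟩,
    ⟨n - 1 - y, ⟨by omega, by omega, ?_⟩, ⟨by omega, by omega, ?_⟩⟩⟩ <;>
    simpa only [hk', hk'', hx_rev, hy_rev]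

theorem pathEnemy_of_reverseRel {u : ℕ} (hu : u < n) (h : PathEnemy R n (n - 1 - u)) :
    PathEnemy (reverseRel R n) n u := by
  obtain ⟨k, hk, hvk, hvk'⟩ := h
  refine ⟨n - 2 - k, by omega, ⟨hu, by omega, ?_⟩, ⟨hu, by omega, ?_⟩⟩
  · rwa [show n - 1 - (n - 2 - k) = k + 1 by omega]
  · rwa [show n - 1 - (n - 2 - k + 1) = k by omega]

theorem three_le (h : CCEHamPath R n) (hn : 2 ≤ n) : 3 ≤ n := by
  obtain ⟨-, ⟨x, h0x, h1x⟩, -⟩ := h.adj 0 (by omega)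
  have := (h.lt_of_rel h0x).2
  have := h.twoTwo.ne_of_rel h0x
  have := h.twoTwo.ne_of_rel h1x
  omega

theorem edge_unique (h : CCEHamPath R n) {v k j : ℕ} (hk : R v k) (hk' : R v (k + 1))
    (hj : R v j) (hj' : R v (j + 1)) : k = j := by
  have := h.twoTwo.eq_or_eq_of_out hk hk' (by omega) hj
  have := h.twoTwo.eq_or_eq_of_out hk hk' (by omega) hj'
  omega

theorem eq_of_not_pathEnemy (h : CCEHamPath R n) {u u' : ℕ} (hu : u < n) (hu' : u' < n)
    (hnu : ¬ PathEnemy R n u) (hnu' : ¬ PathEnemy R n u') : u = u' := by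
  by_contra hne
  choose! s hs using fun k (hk : k + 1 < n) => (h.adj k hk).2.2
  have hmaps : ∀ k ∈ Finset.range (n - 1), s k ∈ ((Finset.range n).erase u).erase u' := by
    intro k hk
    have hk : k + 1 < n := by rw [Finset.mem_range] at hk; omega
    have hsk : PathEnemy R n (s k) := ⟨k, hk, hs k hk⟩
    simp only [Finset.mem_erase, Finset.mem_range]
    exact ⟨fun he => hnu' (he ▸ hsk), fun he => hnu (he ▸ hsk),
      (h.lt_of_rel (hs k hk).1).1⟩
  have hinj : Set.InjOn s (Finset.range (n - 1)) := by
    intro k hk j hj hkj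
    simp only [Finset.coe_range, Set.mem_Iio] at hk hj
    exact h.edge_unique (hs k (by omega)).1 (hs k (by omega)).2
      (hkj ▸ (hs j (by omega)).1) (hkj ▸ (hs j (by omega)).2)
  have hcard := Finset.card_le_card_of_injOn s hmaps hinj
  rw [Finset.card_range, Finset.card_erase_of_mem (by simp [hu', Ne.symm hne]),
    Finset.card_erase_of_mem (by simpa using hu), Finset.card_range] at hcard
  omega

/-- If every `k ≥ 1` is a common in-neighbour of some edge `j`, then `j ≥ k + 1` by induction
on `k`, which fails at `k = n - 1`. -/
theorem exists_not_pathEnemy (h : CCEHamPath R n) (hn : 2 ≤ n) :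
    ∃ k, 1 ≤ k ∧ k < n ∧ ¬ PathEnemy R n k := by
  by_contra! hall
  have hR := h.twoTwo
  have key : ∀ k, 1 ≤ k → k < n → ∀ j, R k j → R k (j + 1) → k + 1 ≤ j := by
    intro k hk1
    induction k, hk1 using Nat.le_induction with
    | base =>
      intro _ j hj hj'
      have := hR.ne_of_rel hj
      have := hR.ne_of_rel hj'
      omega
    | succ k hk ih =>
      intro hkn j' hj' hj'1
      obtain ⟨j, -, hj, hj1⟩ := hall k hk (by omega)
      have hkj := ih (by omega) j hj hj1
      obtain ⟨x, hkx, hk1x⟩ := (h.adj k (by omega)).2.1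
      have := hR.eq_or_eq_of_out hj hj1 (by omega) hkx
      have := hR.eq_or_eq_of_out hj' hj'1 (by omega) hk1x
      have := hR.ne_of_rel hj'
      have := hR.ne_of_rel hj'1
      omega
  obtain ⟨j, hj, hj0, hj1⟩ := hall (n - 1) (by omega) (by omega)
  have := key (n - 1) (by omega) (by omega) j hj0 hj1
  omega

theorem pathEnemy_zero (h : CCEHamPath R n) (hn : 2 ≤ n) : PathEnemy R n 0 := by
  by_contra h0
  obtain ⟨k, hk1, hkn, hk⟩ := h.exists_not_pathEnemy hn
  have := h.eq_of_not_pathEnemy hkn (by omega) hk h0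
  omega

/-- Two in-neighbours of `0` that are common in-neighbours of edges both have out-neighbourhood
`{0, 1}`, so one of them would be a common in-neighbour of `{1, 2}`, an arc into `2`. -/
theorem exists_rel_zero_not_pathEnemy (h : CCEHamPath R n) (hn : 3 ≤ n) :
    ∃ u, R u 0 ∧ ¬ PathEnemy R n u := by
  have hR := h.twoTwo
  obtain ⟨i, hi, hi0, hi'0⟩ := h.flip.pathEnemy_zero (by omega)
  by_contra! hall
  have out_zero_one : ∀ u, R u 0 → R u 1 := by
    intro u hu0
    obtain ⟨j, -, hj, hj'⟩ := hall u hu0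
    obtain rfl : j = 0 := by
      have := hR.eq_or_eq_of_out hj hj' (by omega) hu0
      omega
    exact hj'
  have hii' : i ≠ i + 1 := by omega
  obtain ⟨-, -, ⟨y, hy1, hy2⟩⟩ := h.adj 1 (by omega)
  obtain rfl | rfl := hR.eq_or_eq_of_in (out_zero_one i hi0) (out_zero_one _ hi'0) hii' hy1
  · have := hR.eq_or_eq_of_out hi0 (out_zero_one _ hi0) (by omega) hy2
    omega
  · have := hR.eq_or_eq_of_out hi'0 (out_zero_one _ hi'0) (by omega) hy2
    omega

theorem exists_rel_zero_rel_last (h : CCEHamPath R n) (hn : 3 ≤ n) :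
    ∃ u, R u 0 ∧ R u (n - 1) := by
  obtain ⟨u, hu0, hu⟩ := h.exists_rel_zero_not_pathEnemy hn
  obtain ⟨u', ⟨hu'n, -, hu'0⟩, hu'⟩ := h.reverse.exists_rel_zero_not_pathEnemy hn
  have huu' : u = n - 1 - u' := h.eq_of_not_pathEnemy (h.lt_of_rel hu0).1 (by omega) hu
    fun he => hu' (pathEnemy_of_reverseRel hu'n he)
  exact ⟨u, hu0, huu' ▸ hu'0⟩

theorem adj_zero_last (h : CCEHamPath R n) (hn : 3 ≤ n) : (CCE R).Adj 0 (n - 1) := by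
  obtain ⟨y, hy0, hyl⟩ := h.exists_rel_zero_rel_last hn
  obtain ⟨x, hx0, hxl⟩ := h.flip.exists_rel_zero_rel_last hn
  exact ⟨by omega, ⟨x, hx0, hxl⟩, ⟨y, hy0, hyl⟩⟩

theorem of_iso {W : Type*} {A : W → W → Prop} (hA : IsTwoTwo A) (φ : pathGraph n ≃g CCE A) :
    CCEHamPath (Relation.Map A (fun w => (φ.symm w).val) (fun w => (φ.symm w).val)) n := by
  have hf : Function.Injective fun w => (φ.symm w).val :=
    Fin.val_injective.comp φ.symm.injective
  refine ⟨hA.map hf, ?_, fun k hk => ?_⟩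
  · rintro _ _ ⟨a, b, -, rfl, rfl⟩
    exact ⟨(φ.symm a).isLt, (φ.symm b).isLt⟩
  · have hadj : (pathGraph n).Adj ⟨k, by omega⟩ ⟨k + 1, hk⟩ := pathGraph_adj.2 (Or.inl rfl)
    simpa using (cce_map_adj hf).2 (φ.map_adj_iff.2 hadj)

end CCEHamPath

theorem stmt4 (n : ℕ) (hn : 2 ≤ n) (W : Type*) (A : W → W → Prop)
    (hA : IsTwoTwo A) : ¬ Nonempty (SimpleGraph.pathGraph n ≃g CCE A) := by
  rintro ⟨φ⟩
  have hf : Function.Injective fun w => (φ.symm w).val :=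
    Fin.val_injective.comp φ.symm.injective
  have hpath := CCEHamPath.of_iso hA φ
  have hn3 := hpath.three_le hn
  have hends : (pathGraph n).Adj ⟨0, by omega⟩ ⟨n - 1, by omega⟩ := by
    rw [← φ.map_adj_iff, ← cce_map_adj hf]
    simpa using hpath.adj_zero_last hn3
  simp only [pathGraph_adj] at hends
  omega
end

section
/- For every integer m ≥ 3 and every t with 1 ≤ t ≤ m−2, the digraph on vertices v_1,…,v_m (indices mod m) with arc set ∪_{k=1}^m {(v_k, v_{k+t}), (v_k, v_{k+t+1})} is a ⟨2,2⟩ digraph whose CCE graph is the cycle v_1 v_2 ⋯ v_m v_1. -/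
open SimpleGraph

/-! The digraph is the circulant digraph with arcs `k → k + t` and `k → k + (t + 1)`. In a
circulant digraph with shifts `a, b`, the out-neighbourhoods of `u` and `v` meet exactly when
`v - u ∈ {0, b - a, a - b}`; reversing all arcs gives the circulant digraph with shifts `-a, -b`,
so the same holds for in-neighbourhoods. With `b - a = 1` this is the cycle. -/

section Circulant

variable {G : Type*} [AddCommGroup G]

def circulantAdj (a b : G) (k l : G) : Prop :=
  l = k + a ∨ l = k + b

theorem circulantAdj_swap {a b k l : G} :
    circulantAdj a b k l ↔ circulantAdj (-a) (-b) l k := by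
  simp only [circulantAdj, eq_add_neg_iff_add_eq, eq_comm]

theorem circulantAdj_eq_or_eq_or_eq {a b v x y z : G} (hx : circulantAdj a b v x)
    (hy : circulantAdj a b v y) (hz : circulantAdj a b v z) : x = y ∨ x = z ∨ y = z := by
  rcases hx with rfl | rfl <;> rcases hy with rfl | rfl <;> rcases hz with rfl | rfl <;> simp

theorem isTwoTwo_circulantAdj {a b : G} (ha : a ≠ 0) (hb : b ≠ 0) :
    IsTwoTwo (circulantAdj a b) := by
  refine ⟨fun v hv => ?_, fun v x y z => circulantAdj_eq_or_eq_or_eq, fun v x y z hx hy hz => ?_⟩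
  · rcases hv with hv | hv
    · exact ha (left_eq_add.mp hv)
    · exact hb (left_eq_add.mp hv)
  · rw [circulantAdj_swap] at hx hy hz
    exact circulantAdj_eq_or_eq_or_eq hx hy hz

theorem exists_circulantAdj_and_circulantAdj_iff {a b u v : G} :
    (∃ x, circulantAdj a b u x ∧ circulantAdj a b v x) ↔
      u = v ∨ v = u + (b - a) ∨ u = v + (b - a) := by
  constructor
  · rintro ⟨x, rfl | rfl, h | h⟩
    · exact .inl (add_right_cancel h)
    · exact .inr (.inr (add_right_cancel (b := a) (by rw [h]; abel)))
    · exact .inr (.inl (add_right_cancel (b := a) (by rw [← h]; abel)))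
    · exact .inl (add_right_cancel h)
  · rintro (rfl | rfl | rfl)
    · exact ⟨u + a, .inl rfl, .inl rfl⟩
    · exact ⟨u + b, .inr rfl, .inl (by abel)⟩
    · exact ⟨v + b, .inl (by abel), .inr rfl⟩

theorem cce_circulantAdj (a b : G) :
    CCE (circulantAdj a b) = fromRel (fun u v => v = u + (b - a)) := by
  ext u v
  have hcommonIn : (∃ y, circulantAdj a b y u ∧ circulantAdj a b y v) ↔
      u = v ∨ v = u + (b - a) ∨ u = v + (b - a) := by
    simp only [circulantAdj_swap (a := a), exists_circulantAdj_and_circulantAdj_iff,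
      neg_sub_neg, ← neg_sub b a, ← sub_eq_add_neg, eq_sub_iff_add_eq]
    rw [eq_comm (a := v + _), eq_comm (a := u + _)]
    tauto
  simp only [CCE, fromRel_adj, exists_circulantAdj_and_circulantAdj_iff, hcommonIn]
  tauto

end Circulant

theorem ZMod.natCast_ne_zero_of_pos_of_lt {n m : ℕ} (h0 : 0 < n) (h : n < m) :
    (n : ZMod m) ≠ 0 := by
  rw [Ne, ZMod.natCast_eq_zero_iff]
  exact Nat.not_dvd_of_pos_of_lt h0 h

theorem stmt5_general (m t : ℕ) (ht1 : 1 ≤ t) (ht2 : t ≤ m - 2) :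
    IsTwoTwo (fun k l : ZMod m => l = k + (t : ZMod m) ∨ l = k + (t : ZMod m) + 1) ∧
    CCE (fun k l : ZMod m => l = k + (t : ZMod m) ∨ l = k + (t : ZMod m) + 1) =
      SimpleGraph.fromRel (fun u v : ZMod m => v = u + 1) := by
  have hrel : (fun k l : ZMod m => l = k + (t : ZMod m) ∨ l = k + (t : ZMod m) + 1) =
      circulantAdj (t : ZMod m) (t + 1) := by
    funext k l
    simp only [circulantAdj, add_assoc]
  have ht : (t : ZMod m) ≠ 0 := ZMod.natCast_ne_zero_of_pos_of_lt (by omega) (by omega)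
  have ht' : (t : ZMod m) + 1 ≠ 0 := by
    exact_mod_cast ZMod.natCast_ne_zero_of_pos_of_lt (n := t + 1) (by omega) (by omega)
  rw [hrel, cce_circulantAdj, add_sub_cancel_left]
  exact ⟨isTwoTwo_circulantAdj ht ht', rfl⟩

theorem stmt5 (m t : ℕ) (hm : 3 ≤ m) (ht1 : 1 ≤ t) (ht2 : t ≤ m - 2) :
    IsTwoTwo (fun k l : ZMod m => l = k + (t : ZMod m) ∨ l = k + (t : ZMod m) + 1) ∧
    CCE (fun k l : ZMod m => l = k + (t : ZMod m) ∨ l = k + (t : ZMod m) + 1) =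
      SimpleGraph.fromRel (fun u v : ZMod m => v = u + 1) :=
  stmt5_general m t ht1 ht2
end

section
/- Every cycle of length at least 3 is the CCE graph of some ⟨2,2⟩ digraph. -/
open SimpleGraph

/-!
On `Fin n` take the circulant digraph with arcs `u → u + 1` and `u → u + 2`. Every vertex `u` has
out-neighbours `u + 1, u + 2` and in-neighbours `u - 1, u - 2`, and two distinct vertices have a
common out-neighbour, or a common in-neighbour, exactly when they differ by `1`. Hence its CCE
graph is the circulant graph with jump `1`, which is the cycle.
-/

section CirculantArcs

variable {G : Type*} [AddCommGroup G]

def circulantArcs (a b : G) (u v : G) : Prop := v - u = a ∨ v - u = b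

theorem isTwoTwo_circulantArcs {a b : G} (ha : a ≠ 0) (hb : b ≠ 0) :
    IsTwoTwo (circulantArcs a b) := by
  unfold IsTwoTwo circulantArcs
  grind

theorem cce_circulantArcs (a b : G) : CCE (circulantArcs a b) = circulantGraph {b - a} := by
  ext u v
  simp only [CCE, circulantArcs, circulantGraph_adj, Set.mem_singleton_iff]
  constructor
  · rintro ⟨huv, ⟨x, hux, hvx⟩, -⟩
    grind
  · rintro ⟨huv, h | h⟩
    · exact ⟨huv, ⟨u + a, by grind⟩, ⟨u - b, by grind⟩⟩
    · exact ⟨huv, ⟨v + a, by grind⟩, ⟨v - b, by grind⟩⟩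

end CirculantArcs

theorem stmt6 (n : ℕ) (hn : 3 ≤ n) :
    IsTwoTwoCCE (SimpleGraph.cycleGraph n) := by
  obtain ⟨k, rfl⟩ : ∃ k, n = k + 3 := ⟨n - 3, by omega⟩
  have one_ne_zero : (1 : Fin (k + 3)) ≠ 0 := by simp
  have two_ne_zero : (1 + 1 : Fin (k + 3)) ≠ 0 := by
    simp [Fin.ext_iff, Fin.val_add, Nat.mod_eq_of_lt (show 2 < k + 3 by omega)]
  have cycle_eq : cycleGraph (k + 3) = CCE (circulantArcs (1 : Fin (k + 3)) (1 + 1)) := by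
    rw [cce_circulantArcs, add_sub_cancel_left, cycleGraph_eq_circulantGraph]
  exact ⟨_, _, isTwoTwo_circulantArcs one_ne_zero two_ne_zero, ⟨cycle_eq ▸ Iso.refl⟩⟩
end

section
/- For all positive integers m and n, the disjoint union of two copies of the path on m vertices and one path on n vertices (2P_m ∪ P_n) is the CCE graph of some ⟨2,2⟩ digraph. -/
open SimpleGraph

/-!
Number the vertices of `2P_m ∪ P_n` as `a₀ … a_{m-1}`, `b₀ … b_{m-1}`, `c₀ … c_{n-1}` and let
every vertex point one and two steps ahead along the cyclic sequence `a, b, c`, except that arcs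
inside the `a`- and `b`-blocks are crossed over to the other of these two blocks:
`aᵢ → b_{i+1}, b_{i+2}` and `bᵢ → a_{i+1}, a_{i+2}`. Two consecutive vertices of a path then have
a common out-neighbour two steps ahead and a common in-neighbour one step behind, while the crossing
leaves `(a_{m-1}, b₀)` and `(c_{n-1}, a₀)` without a common out-neighbour and `(b_{m-1}, c₀)`
without a common in-neighbour. On the positions `aᵢ = i`, `bᵢ = m + i`, `cᵢ = 2m + i` everything
is linear arithmetic.
-/

section CCEComap

variable {V W : Type*} {A : V → V → Prop} {f : W → V}

theorem IsTwoTwo.comap (hA : IsTwoTwo A) (hf : f.Injective) :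
    IsTwoTwo (fun i j => A (f i) (f j)) := by
  obtain ⟨hloop, hout, hin⟩ := hA
  refine ⟨fun v => hloop (f v), fun v a b c h₁ h₂ h₃ => ?_, fun v a b c h₁ h₂ h₃ => ?_⟩
  · simpa only [hf.eq_iff] using hout _ _ _ _ h₁ h₂ h₃
  · simpa only [hf.eq_iff] using hin _ _ _ _ h₁ h₂ h₃

theorem cce_comap (hf : f.Injective) (hA : ∀ x y, A x y → x ∈ Set.range f ∧ y ∈ Set.range f) :
    CCE (fun i j => A (f i) (f j)) = (CCE A).comap f := by
  ext i j
  simp only [CCE, comap_adj, hf.ne_iff]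
  refine and_congr_right fun _ =>
    and_congr ⟨fun ⟨x, hx⟩ => ⟨f x, hx⟩, ?_⟩ ⟨fun ⟨y, hy⟩ => ⟨f y, hy⟩, ?_⟩
  · rintro ⟨x, hix, hjx⟩
    obtain ⟨x, rfl⟩ := (hA _ _ hix).2
    exact ⟨x, hix, hjx⟩
  · rintro ⟨y, hyi, hyj⟩
    obtain ⟨y, rfl⟩ := (hA _ _ hyi).1
    exact ⟨y, hyi, hyj⟩

end CCEComap

namespace ThreePaths

variable {m n : ℕ}

def graph (m n : ℕ) : SimpleGraph ℕ where
  Adj u v := (u + 1 = v ∧ v ≠ m ∧ v ≠ 2 * m ∨ v + 1 = u ∧ u ≠ m ∧ u ≠ 2 * m) ∧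
    u < 2 * m + n ∧ v < 2 * m + n
  symm := ⟨fun _ _ h => by omega⟩
  loopless := ⟨fun _ h => by omega⟩

/-- `aᵢ → b_{i+1}, b_{i+2}` (indices mod `m`); `bᵢ → a_{i+1}, a_{i+2}, c_{i+1-m}, c_{i+2-m}`;
`cᵢ → c_{i+1}, c_{i+2}, a_{i+1-n}, a_{i+2-n}`; arcs to nonexistent vertices are dropped. -/
def arc (m n x y : ℕ) : Prop :=
  (x < m ∧ m ≤ y ∧ y < 2 * m ∧ (y = x + 1 ∨ y = x + 2 ∨ y = x + m + 1 ∨ y = x + m + 2)) ∨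
  (m ≤ x ∧ x < 2 * m ∧ y < m ∧ (y + m = x + 1 ∨ y + m = x + 2)) ∨
  (m ≤ x ∧ x < 2 * m + n ∧ 2 * m ≤ y ∧ y < 2 * m + n ∧ (y = x + 1 ∨ y = x + 2)) ∨
  (2 * m ≤ x ∧ x < 2 * m + n ∧ y < m ∧ (y + 2 * m + n = x + 1 ∨ y + 2 * m + n = x + 2))

theorem isTwoTwo_arc : IsTwoTwo (arc m n) := by
  refine ⟨fun x h => ?_, fun x a b c h₁ h₂ h₃ => ?_, fun x a b c h₁ h₂ h₃ => ?_⟩ <;>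
    unfold arc at * <;> omega

theorem mem_range_val_of_arc {x y : ℕ} (h : arc m n x y) :
    x ∈ Set.range (Fin.val : Fin (m + (m + n)) → ℕ) ∧
      y ∈ Set.range (Fin.val : Fin (m + (m + n)) → ℕ) := by
  simp only [Fin.range_val, Set.mem_Iio]
  unfold arc at h
  omega

theorem graph_adj_of_cce_adj {u v : ℕ} (h : (CCE (arc m n)).Adj u v) : (graph m n).Adj u v := by
  obtain ⟨huv, ⟨x, hux, hvx⟩, ⟨y, hyu, hyv⟩⟩ := h
  simp only [graph]
  unfold arc at *
  omega

theorem exists_common_out (hm : 1 ≤ m) (hn : 1 ≤ n) {u : ℕ} (h : (graph m n).Adj u (u + 1)) :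
    ∃ x, arc m n u x ∧ arc m n (u + 1) x := by
  simp only [graph] at h
  refine ⟨if u + 2 < m then m + u + 2 else if u < m then m else
    if u + 2 < 2 * m then u + 2 - m else if u + 2 < 2 * m + n then u + 2 else 0, ?_, ?_⟩ <;>
  unfold arc <;> split_ifs <;> omega

theorem exists_common_in (hm : 1 ≤ m) (hn : 1 ≤ n) {u : ℕ} (h : (graph m n).Adj u (u + 1)) :
    ∃ y, arc m n y u ∧ arc m n y (u + 1) := by
  simp only [graph] at h
  refine ⟨if u = 0 then 2 * m + n - 1 else if u < m then m + u - 1 else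
    if u = m then m - 1 else if u < 2 * m then u - m - 1 else u - 1, ?_, ?_⟩ <;>
  unfold arc <;> split_ifs <;> omega

theorem cce_arc (hm : 1 ≤ m) (hn : 1 ≤ n) : CCE (arc m n) = graph m n := by
  ext u v
  refine ⟨graph_adj_of_cce_adj, fun h => ?_⟩
  wlog huv : u + 1 = v generalizing u v
  · exact (this v u h.symm (by simp only [graph] at h; omega)).symm
  subst huv
  exact ⟨by omega, exists_common_out hm hn h, exists_common_in hm hn h⟩

def position (m n : ℕ) : Fin m ⊕ (Fin m ⊕ Fin n) ≃ Fin (m + (m + n)) :=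
  (Equiv.sumCongr (Equiv.refl _) finSumFinEquiv).trans finSumFinEquiv

theorem sum_pathGraph_eq_comap :
    pathGraph m ⊕g (pathGraph m ⊕g pathGraph n) =
      ((graph m n).comap Fin.val).comap (position m n) := by
  ext (i | i | i) (j | j | j) <;>
    simp only [sum_adj, pathGraph_adj, position, graph, comap_adj, Equiv.coe_trans,
      Function.comp_apply, Equiv.sumCongr_apply, Equiv.coe_refl, Sum.map_inl, Sum.map_inr, id_eq,
      finSumFinEquiv_apply_left, finSumFinEquiv_apply_right, Fin.val_castAdd, Fin.val_natAdd, false_iff] <;>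
    omega

end ThreePaths

open ThreePaths in
theorem stmt9 (m n : ℕ) (hm : 1 ≤ m) (hn : 1 ≤ n) :
    IsTwoTwoCCE (SimpleGraph.pathGraph m ⊕g
      (SimpleGraph.pathGraph m ⊕g SimpleGraph.pathGraph n)) := by
  refine ⟨Fin (m + (m + n)), fun i j => arc m n i j, isTwoTwo_arc.comap Fin.val_injective, ⟨?_⟩⟩
  rw [cce_comap Fin.val_injective fun _ _ => mem_range_val_of_arc, cce_arc hm hn,
    sum_pathGraph_eq_comap]
  exact Iso.comap (position m n) _
end

section
/- Let D be a minimal (2,2) digraph realizing its CCE graph G. If a vertex v of D has two in-neighbors w and x, then either v has degree 2 in G or w and x are adjacent in G. -/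
open SimpleGraph

/-! Deleting the arc `w → v` must destroy some edge `pq` of `CCE A`. Either every common
out-neighbour of `p, q` is reached through `w → v`, so `w ∈ {p, q}` and the other endpoint is an
in-neighbour of `v`, which the in-degree bound forces to be `x`; or every common in-neighbour of
`p, q` is `w` and `v ∈ {p, q}`, giving an edge `va` whose only common in-neighbour is `w`.
Doing the same for `x → v`, if `w, x` are not adjacent we get edges `va`, `vb`, and `a ≠ b`
because a common in-neighbour of `v, a` cannot equal both `w` and `x`. -/

def deleteArc {V : Type*} (A : V → V → Prop) (s t : V) : V → V → Prop :=
  fun u u' => A u u' ∧ ¬(u = s ∧ u' = t)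

section
variable {V : Type*} {A : V → V → Prop} {s t p q : V}

lemma cce_deleteArc_le : CCE (deleteArc A s t) ≤ CCE A :=
  fun _ _ ⟨hpq, ⟨z, hz₁, hz₂⟩, ⟨y, hy₁, hy₂⟩⟩ => ⟨hpq, ⟨z, hz₁.1, hz₂.1⟩, ⟨y, hy₁.1, hy₂.1⟩⟩

lemma MinimalTwoTwoAcyclic.exists_adj_not_adj_deleteArc (hA : MinimalTwoTwoAcyclic A)
    (hst : A s t) : ∃ p q, (CCE A).Adj p q ∧ ¬(CCE (deleteArc A s t)).Adj p q := by
  by_contra! h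
  have hCCE : CCE (deleteArc A s t) = CCE A := le_antisymm cce_deleteArc_le h
  exact (hA.2 _ (fun _ _ h => h.1) hCCE s t hst).2 ⟨rfl, rfl⟩

lemma witnesses_of_adj_of_not_adj_deleteArc (hpq : (CCE A).Adj p q)
    (hlost : ¬(CCE (deleteArc A s t)).Adj p q) :
    (∀ z, A p z → A q z → z = t ∧ (p = s ∨ q = s)) ∨
      (∀ y, A y p → A y q → y = s ∧ (p = t ∨ q = t)) := by
  by_contra! h
  obtain ⟨⟨z, hpz, hqz, hz⟩, ⟨y, hyp, hyq, hy⟩⟩ := h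
  refine hlost ⟨hpq.1, ⟨z, ⟨hpz, ?_⟩, ⟨hqz, ?_⟩⟩, ⟨y, ⟨hyp, ?_⟩, ⟨hyq, ?_⟩⟩⟩ <;>
    rintro ⟨rfl, rfl⟩ <;> simp_all

lemma adj_or_exists_of_not_adj_deleteArc
    (hin : ∀ v a b c, A a v → A b v → A c v → a = b ∨ a = c ∨ b = c) {v o : V} (hso : s ≠ o)
    (hs : A s v) (ho : A o v) (hpq : (CCE A).Adj p q)
    (hlost : ¬(CCE (deleteArc A s v)).Adj p q) :
    (CCE A).Adj s o ∨ ∃ a, (CCE A).Adj v a ∧ ∀ y, A y v → A y a → y = s := by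
  obtain ⟨hne, ⟨z, hpz, hqz⟩, ⟨y₀, hy₀p, hy₀q⟩⟩ := id hpq
  have in_neighbor_eq_o : ∀ r, r ≠ s → A r v → r = o := fun r hrs hr => by
    rcases hin v r o s hr ho hs with h | h | h
    exacts [h, absurd h hrs, absurd h.symm hso]
  rcases witnesses_of_adj_of_not_adj_deleteArc hpq hlost with hout | hinw
  · obtain ⟨rfl, rfl | rfl⟩ := hout z hpz hqz
    · obtain rfl := in_neighbor_eq_o q hne.symm hqz
      exact Or.inl hpq
    · obtain rfl := in_neighbor_eq_o p hne hpz
      exact Or.inl hpq.symm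
  · right
    obtain ⟨-, rfl | rfl⟩ := hinw y₀ hy₀p hy₀q
    · exact ⟨q, hpq, fun y hyv hyq => (hinw y hyv hyq).1⟩
    · exact ⟨p, hpq.symm, fun y hyv hyp => (hinw y hyp hyv).1⟩

end

theorem stmt18 {V : Type*} (A : V → V → Prop) (hA : MinimalTwoTwoAcyclic A)
    (v w x : V) (hwx : w ≠ x) (hw : A w v) (hx : A x v) :
    (∃ a b, a ≠ b ∧ (CCE A).Adj v a ∧ (CCE A).Adj v b) ∨ (CCE A).Adj w x := by
  have hin := hA.1.1.2.2
  obtain ⟨p, q, hpq, hlost⟩ := hA.exists_adj_not_adj_deleteArc hw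
  obtain ⟨p', q', hpq', hlost'⟩ := hA.exists_adj_not_adj_deleteArc hx
  rcases adj_or_exists_of_not_adj_deleteArc hin hwx hw hx hpq hlost with hwx' | ⟨a, hva, ha⟩
  · exact Or.inr hwx'
  rcases adj_or_exists_of_not_adj_deleteArc hin hwx.symm hx hw hpq' hlost' with hxw | ⟨b, hvb, hb⟩
  · exact Or.inr hxw.symm
  refine Or.inl ⟨a, b, ?_, hva, hvb⟩
  rintro rfl
  obtain ⟨y, hyv, hya⟩ := hva.2.2
  exact hwx ((ha y hyv hya).symm.trans (hb y hyv hya))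
end
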